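/- Let t₁ and t₂ be red-black trees and a a key. Then the cost of Join(t₁, a, t₂), i.e., the number of recursive calls to JoinRight (or symmetrically JoinLeft) it performs, is at most 1 + 2(⌈log₂(1 + max(|t₁|, |t₂|))⌉ − ⌊(⌈log₂(1 + min(|t₁|, |t₂|))⌉ − 1)/2⌋), where |t| denotes the number of internal (key-carrying) nodes of t. -/

import Mathlib

/-- Node colors for red-black trees. -/
inductive Color where
  | red : Color
  | black : Color
deriving DecidableEq

/-- Plain binary trees with colored nodes. -/
inductive RBTree (α : Type) where
  | leaf : RBTree α
  | node : Color → RBTree α → α → RBTree α → RBTree α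

namespace RBTree

variable {α : Type}

/-- The black height of a tree (computed along the left spine). -/
def blackHeight : RBTree α → ℕ
  | leaf => 0
  | node Color.red l _ _ => blackHeight l
  | node Color.black l _ _ => blackHeight l + 1

/-- The color of the root; leaves count as black. -/
def rootColor : RBTree α → Color
  | leaf => Color.black
  | node c _ _ _ => c

/-- In-order traversal. -/
def inorder : RBTree α → List α
  | leaf => []
  | node _ l a r => inorder l ++ a :: inorder r

/-- Number of internal (key-carrying) nodes. -/
def size : RBTree α → ℕ
  | leaf => 0
  | node _ l _ r => size l + 1 + size r

/-- `IsRBT t y n` means `t` is a valid red-black tree with root color `y`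
and black height `n`, mirroring the indexed inductive family `irbt`. -/
inductive IsRBT : RBTree α → Color → ℕ → Prop where
  | leaf : IsRBT leaf Color.black 0
  | red {t₁ t₂ : RBTree α} {n : ℕ} (a : α) :
      IsRBT t₁ Color.black n → IsRBT t₂ Color.black n →
      IsRBT (node Color.red t₁ a t₂) Color.red n
  | black {t₁ t₂ : RBTree α} {y₁ y₂ : Color} {n : ℕ} (a : α) :
      IsRBT t₁ y₁ n → IsRBT t₂ y₂ n →
      IsRBT (node Color.black t₁ a t₂) Color.black (n + 1)

end RBTree
namespace RBTree

variable {α : Type}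

/-- The cost of `JoinRight`: the number of recursive invocations of
`JoinRight` performed (each recursive call incurs unit cost; the
non-recursive rebalancing cases incur zero cost). -/
def joinRightCost : RBTree α → α → RBTree α → ℕ
  | leaf, _, _ => 0
  | node Color.red _ _ t₁₂, a, t₂ => 1 + joinRightCost t₁₂ a t₂
  | node Color.black t₁₁ a₁ t₁₂, a, t₂ =>
      if blackHeight (node Color.black t₁₁ a₁ t₁₂) = blackHeight t₂ + 1 then 0
      else 1 + joinRightCost t₁₂ a t₂

/-- The cost of `JoinLeft`, symmetrically. -/
def joinLeftCost : RBTree α → α → RBTree α → ℕ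
  | _, _, leaf => 0
  | t₁, a, node Color.red t₂₁ _ _ => 1 + joinLeftCost t₁ a t₂₁
  | t₁, a, node Color.black t₂₁ a₂ t₂₂ =>
      if blackHeight (node Color.black t₂₁ a₂ t₂₂) = blackHeight t₁ + 1 then 0
      else 1 + joinLeftCost t₁ a t₂₁

/-- The cost of `Join`: the number of recursive invocations of
`JoinRight`/`JoinLeft` performed (the equal-height case and the final
recoloring incur zero cost). -/
def joinCost (t₁ : RBTree α) (a : α) (t₂ : RBTree α) : ℕ :=
  if blackHeight t₂ < blackHeight t₁ then joinRightCost t₁ a t₂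
  else if blackHeight t₁ < blackHeight t₂ then joinLeftCost t₁ a t₂
  else 0

end RBTree

/-!
`JoinRight` walks down the right spine of the taller tree until it meets a black node of
black height one more than the shorter tree. Along the spine every black node lowers the black
height by one and no two red nodes are adjacent, so there are at most `2 (n₁ - n₂)` calls. A
red-black tree of black height `n` has `2 ^ n ≤ |t| + 1 ≤ 2 ^ (2n + 1)`, which turns the
black heights into the logarithms of the statement.
-/

namespace RBTree

variable {α : Type} {t : RBTree α} {y : Color} {n : ℕ}

theorem IsRBT.blackHeight_eq (h : IsRBT t y n) : t.blackHeight = n := by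
  induction h with
  | leaf => rfl
  | red _ _ _ ih => simpa [blackHeight] using ih
  | black _ _ _ ih => simp [blackHeight, ih]

theorem IsRBT.two_pow_le_size_add_one (h : IsRBT t y n) : 2 ^ n ≤ t.size + 1 := by
  induction h with
  | leaf => simp [size]
  | red _ _ _ ih₁ ih₂ => simp only [size]; omega
  | black _ _ _ ih₁ ih₂ => simp only [size, pow_succ]; omega

theorem IsRBT.size_add_one_le_mul_four_pow (h : IsRBT t y n) :
    t.size + 1 ≤ (if y = Color.red then 2 else 1) * 4 ^ n := by
  induction h with
  | leaf => simp [size]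
  | red _ _ _ ih₁ ih₂ => simp only [size, if_true, reduceCtorEq, if_false] at *; omega
  | black _ _ _ ih₁ ih₂ =>
    simp only [size, reduceCtorEq, if_false, pow_succ] at *
    split_ifs at ih₁ ih₂ <;> omega

theorem IsRBT.size_add_one_le (h : IsRBT t y n) : t.size + 1 ≤ 2 ^ (2 * n + 1) :=
  calc t.size + 1 ≤ (if y = Color.red then 2 else 1) * 4 ^ n := h.size_add_one_le_mul_four_pow
    _ ≤ 2 * 4 ^ n := Nat.mul_le_mul_right _ (by split <;> norm_num)
    _ = 2 ^ (2 * n + 1) := by rw [pow_succ, pow_mul]; ring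

theorem IsRBT.le_clog_size (h : IsRBT t y n) : n ≤ Nat.clog 2 (t.size + 1) :=
  Nat.clog_pow 2 n (by norm_num) ▸ Nat.clog_mono_right 2 h.two_pow_le_size_add_one

theorem IsRBT.clog_size_le (h : IsRBT t y n) : Nat.clog 2 (t.size + 1) ≤ 2 * n + 1 :=
  (Nat.clog_le_iff_le_pow (by norm_num)).2 h.size_add_one_le

/-- The slack of one at a black root pays for the extra call made at a red parent. -/
theorem IsRBT.joinRightCost_add_le {t₂ : RBTree α} (a : α) (h : IsRBT t y n)
    (hlt : t₂.blackHeight < n) :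
    joinRightCost t a t₂ + (if y = Color.black then 1 else 0) ≤ 2 * (n - t₂.blackHeight) := by
  induction h with
  | leaf => omega
  | red _ _ _ _ ih => simp only [joinRightCost, reduceCtorEq, if_true, if_false] at ih ⊢; omega
  | black b h₁ h₂ _ ih =>
    simp only [joinRightCost, (h₁.black b h₂).blackHeight_eq, if_true]
    split_ifs
    · omega
    · have := ih (by omega)
      split_ifs at this <;> omega

theorem IsRBT.joinLeftCost_add_le {t₁ : RBTree α} (a : α) (h : IsRBT t y n)
    (hlt : t₁.blackHeight < n) :
    joinLeftCost t₁ a t + (if y = Color.black then 1 else 0) ≤ 2 * (n - t₁.blackHeight) := by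
  induction h with
  | leaf => omega
  | red _ _ _ ih _ => simp only [joinLeftCost, reduceCtorEq, if_true, if_false] at ih ⊢; omega
  | black b h₁ h₂ ih _ =>
    simp only [joinLeftCost, (h₁.black b h₂).blackHeight_eq, if_true]
    split_ifs
    · omega
    · have := ih (by omega)
      split_ifs at this <;> omega

theorem joinCost_le_two_mul_sub {t₁ t₂ : RBTree α} {y₁ y₂ : Color} {n₁ n₂ : ℕ} (a : α)
    (h₁ : IsRBT t₁ y₁ n₁) (h₂ : IsRBT t₂ y₂ n₂) :
    joinCost t₁ a t₂ ≤ 2 * (max n₁ n₂ - min n₁ n₂) := by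
  have hright := h₁.joinRightCost_add_le (t₂ := t₂) a
  have hleft := h₂.joinLeftCost_add_le (t₁ := t₁) a
  rw [h₂.blackHeight_eq] at hright
  rw [h₁.blackHeight_eq] at hleft
  unfold joinCost
  rw [h₁.blackHeight_eq, h₂.blackHeight_eq]
  split_ifs with hgt hlt
  · have := hright hgt; omega
  · have := hleft hlt; omega
  · omega

end RBTree

/-- **User-facing cost of Join.**  Let `t₁` and `t₂` be red-black trees and
`a` a key.  Then the cost of `Join(t₁, a, t₂)` — the number of recursive
calls to `JoinRight` (or symmetrically `JoinLeft`) it performs — is at most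
`1 + 2 * (⌈log₂ (1 + max |t₁| |t₂|)⌉ - ⌊(⌈log₂ (1 + min |t₁| |t₂|)⌉ - 1) / 2⌋)`,
where `|t|` is the number of internal (key-carrying) nodes of `t`. -/
theorem join_cost_bound_nodes {α : Type} {y₁ y₂ : Color} {n₁ n₂ : ℕ}
    (t₁ : RBTree α) (a : α) (t₂ : RBTree α)
    (h₁ : RBTree.IsRBT t₁ y₁ n₁) (h₂ : RBTree.IsRBT t₂ y₂ n₂) :
    RBTree.joinCost t₁ a t₂ ≤
      1 + 2 * (Nat.clog 2 (1 + max t₁.size t₂.size) -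
        (Nat.clog 2 (1 + min t₁.size t₂.size) - 1) / 2) := by
  have clog_max : max n₁ n₂ ≤ Nat.clog 2 (1 + max t₁.size t₂.size) := by
    refine max_le (h₁.le_clog_size.trans ?_) (h₂.le_clog_size.trans ?_) <;>
      exact Nat.clog_mono_right 2 (by omega)
  have clog_min : Nat.clog 2 (1 + min t₁.size t₂.size) ≤ 2 * min n₁ n₂ + 1 := by
    rcases min_cases n₁ n₂ with ⟨hmin, -⟩ | ⟨hmin, -⟩ <;> rw [hmin]
    · exact (Nat.clog_mono_right 2 (by omega)).trans h₁.clog_size_le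
    · exact (Nat.clog_mono_right 2 (by omega)).trans h₂.clog_size_le
  have := RBTree.joinCost_le_two_mul_sub a h₁ h₂
  omega
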